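/- Let 0 < p < ∞ and 0 < q < r < ∞, and let X be a closed linear subspace of L_{p,q}(0,∞) which is strongly embedded into L_{p,q}(0,∞). Then there exists a constant c > 0 such that ‖x‖_{p,r} ≥ c ‖x‖_{p,q} for all x ∈ X; in particular (since also ‖x‖_{p,r} ≤ C(p,q,r)‖x‖_{p,q} for all measurable x), X embeds isomorphically into L_{p,r}(0,∞) via the inclusion map. -/

import Mathlib

open MeasureTheory Filter Set Topology
open scoped ENNReal

noncomputable section

/-- Lebesgue measure on `(0,∞)`. -/
def mIoi : Measure ℝ := volume.restrict (Set.Ioi (0:ℝ))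

/-- Decreasing rearrangement of `f` with respect to Lebesgue measure on `(0,∞)`:
`μ_t(f) = inf { s ≥ 0 : m({ x : |f(x)| > s }) ≤ t }`. -/
def rearr (f : ℝ → ℂ) (t : ℝ) : ℝ :=
  sInf {s : ℝ | 0 ≤ s ∧ mIoi {x | s < ‖f x‖} ≤ ENNReal.ofReal t}

/-- The Lorentz `L_{p,q}(0,∞)` quasi-norm (extended-real valued):
`‖f‖_{p,q} = ((q/p) ∫_0^∞ t^{q/p-1} μ_t(f)^q dt)^{1/q}`. -/
def lorentzNormE (p q : ℝ) (f : ℝ → ℂ) : ℝ≥0∞ :=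
  (ENNReal.ofReal (q / p) *
    ∫⁻ t in Set.Ioi (0:ℝ), ENNReal.ofReal (t ^ (q / p - 1) * rearr f t ^ q)) ^ (1 / q)

/-- Membership in the Lorentz space `L_{p,q}(0,∞)`. -/
def MemLorentz (p q : ℝ) (f : ℝ → ℂ) : Prop :=
  AEMeasurable f mIoi ∧ lorentzNormE p q f < ⊤

/-- The real-valued Lorentz quasi-norm. -/
def lorNorm (p q : ℝ) (f : ℝ → ℂ) : ℝ := (lorentzNormE p q f).toReal

/-- A set `X ⊆ L_{p,q}(0,∞)` is strongly embedded if every sequence in `X` that converges to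
`0` in measure also converges to `0` in the `L_{p,q}` quasi-norm (equivalently, the quasi-norm
topology and the topology of convergence in measure coincide on `X`). -/
def StronglyEmbedded (p q : ℝ) (X : Set (ℝ → ℂ)) : Prop :=
  ∀ x : ℕ → ℝ → ℂ, (∀ n, x n ∈ X) →
    TendstoInMeasure mIoi x atTop (0 : ℝ → ℂ) →
    Tendsto (fun n => lorNorm p q (x n)) atTop (nhds 0)

lemma rearr_nonneg (f : ℝ → ℂ) (t : ℝ) : 0 ≤ rearr f t :=
  Real.sInf_nonneg (fun _ hs => hs.1)

lemma rearr_bddBelow (f : ℝ → ℂ) (t : ℝ) :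
    BddBelow {s : ℝ | 0 ≤ s ∧ mIoi {x | s < ‖f x‖} ≤ ENNReal.ofReal t} :=
  ⟨0, fun _ hs => hs.1⟩

lemma rearr_anti {f : ℝ → ℂ} {t t' : ℝ}
    (hne : ({s : ℝ | 0 ≤ s ∧ mIoi {x | s < ‖f x‖} ≤ ENNReal.ofReal t}).Nonempty)
    (h : t ≤ t') : rearr f t' ≤ rearr f t :=
  csInf_le_csInf (rearr_bddBelow f t') hne
    (fun s hs => ⟨hs.1, hs.2.trans (ENNReal.ofReal_le_ofReal h)⟩)

lemma meas_le_of_rearr_lt {f : ℝ → ℂ} {t ε : ℝ}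
    (hne : ({s : ℝ | 0 ≤ s ∧ mIoi {x | s < ‖f x‖} ≤ ENNReal.ofReal t}).Nonempty)
    (h : rearr f t < ε) :
    mIoi {x | ε ≤ ‖f x‖} ≤ ENNReal.ofReal t := by
  obtain ⟨s, ⟨_, hsd⟩, hsε⟩ := (csInf_lt_iff (rearr_bddBelow f t) hne).mp h
  exact le_trans (measure_mono fun x hx => lt_of_lt_of_le hsε hx) hsd

lemma rearrSet_nonempty {f : ℝ → ℂ} (hf : AEMeasurable f mIoi)
    (hgood : ∃ s : ℝ, mIoi {x | s < ‖f x‖} ≠ ⊤) {t : ℝ} (ht : 0 < t) :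
    ({s : ℝ | 0 ≤ s ∧ mIoi {x | s < ‖f x‖} ≤ ENNReal.ofReal t}).Nonempty := by
  obtain ⟨s0, hs0⟩ := hgood
  set s1 := max s0 0 with hs1def
  have hs1 : mIoi {x | s1 < ‖f x‖} ≠ ⊤ := by
    intro h
    exact hs0 (top_le_iff.mp (h ▸ measure_mono
      (fun x hx => lt_of_le_of_lt (le_max_left s0 0) hx)))
  set A : ℕ → Set ℝ := fun n => {x | s1 + n < ‖f x‖} with hA
  have hAnull : ∀ n, NullMeasurableSet (A n) mIoi := by
    intro n
    exact (hf.norm.nullMeasurable) measurableSet_Ioi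
  have hAanti : Antitone A := by
    intro n m hnm x hx
    have hx' : s1 + (m:ℝ) < ‖f x‖ := hx
    have hnm' : (n:ℝ) ≤ m := by exact_mod_cast hnm
    show s1 + (n:ℝ) < ‖f x‖
    linarith
  have hAfin : ∃ n, mIoi (A n) ≠ ⊤ := by
    refine ⟨0, fun h => ?_⟩
    have hsub : A 0 ⊆ {x | s1 < ‖f x‖} := by
      intro x hx
      have hx' : s1 + ((0:ℕ):ℝ) < ‖f x‖ := hx
      simpa using hx'
    exact hs1 (top_le_iff.mp (h ▸ measure_mono hsub))
  have hAempty : (⋂ n, A n) = ∅ := by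
    apply Set.eq_empty_iff_forall_notMem.mpr
    intro x hx
    obtain ⟨n, hn⟩ := exists_nat_gt (‖f x‖ - s1)
    have hxn : s1 + (n:ℝ) < ‖f x‖ := Set.mem_iInter.mp hx n
    linarith
  have htend := tendsto_measure_iInter_atTop (μ := mIoi) hAnull hAanti hAfin
  rw [hAempty, measure_empty] at htend
  have hpos : (0:ℝ≥0∞) < ENNReal.ofReal t := ENNReal.ofReal_pos.mpr ht
  obtain ⟨n, hn⟩ := (htend.eventually_lt_const hpos).exists
  exact ⟨s1 + n, ⟨by positivity, hn.le⟩⟩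

lemma lorentzNormE_rpow {p q : ℝ} (hq : 0 < q) (f : ℝ → ℂ) :
    lorentzNormE p q f ^ q = ENNReal.ofReal (q / p) *
      ∫⁻ t in Set.Ioi (0:ℝ), ENNReal.ofReal (t ^ (q / p - 1) * rearr f t ^ q) := by
  rw [lorentzNormE, ← ENNReal.rpow_mul, one_div, inv_mul_cancel₀ hq.ne', ENNReal.rpow_one]

lemma lorentzNormE_zero (p q : ℝ) (hq : 0 < q) {f : ℝ → ℂ}
    (h : ∀ t : ℝ, 0 < t → rearr f t = 0) : lorentzNormE p q f = 0 := by
  have hI : ∫⁻ t in Set.Ioi (0:ℝ), ENNReal.ofReal (t ^ (q / p - 1) * rearr f t ^ q) = 0 := by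
    rw [show (0:ℝ≥0∞) = ∫⁻ _ in Set.Ioi (0:ℝ), 0 from (lintegral_zero).symm]
    apply setLIntegral_congr_fun measurableSet_Ioi (fun t ht => ?_)
    rw [h t ht, Real.zero_rpow hq.ne', mul_zero, ENNReal.ofReal_zero]
  rw [lorentzNormE, hI, mul_zero, ENNReal.zero_rpow_of_pos (by positivity)]

lemma rearr_eq_zero_of_bad {f : ℝ → ℂ}
    (hbad : ∀ s : ℝ, mIoi {x | s < ‖f x‖} = ⊤) (t : ℝ) : rearr f t = 0 := by
  have hset : {s : ℝ | 0 ≤ s ∧ mIoi {x | s < ‖f x‖} ≤ ENNReal.ofReal t} = ∅ := by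
    apply Set.eq_empty_iff_forall_notMem.mpr
    rintro s ⟨-, hs⟩
    rw [hbad s, top_le_iff] at hs
    exact ENNReal.ofReal_ne_top hs
  rw [rearr, hset, Real.sInf_empty]

lemma weak_bound {p q : ℝ} (hp : 0 < p) (hq : 0 < q) {f : ℝ → ℂ} {t : ℝ} (ht : 0 < t)
    (hne : ∀ u : ℝ, 0 < u →
      ({s : ℝ | 0 ≤ s ∧ mIoi {x | s < ‖f x‖} ≤ ENNReal.ofReal u}).Nonempty) :
    ENNReal.ofReal (t ^ (q / p) * rearr f t ^ q) ≤ lorentzNormE p q f ^ q := by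
  rw [lorentzNormE_rpow hq]
  set a := q / p with ha
  have ha0 : 0 < a := by positivity
  have step1 : ∫⁻ u in Set.Ioc (0:ℝ) t, ENNReal.ofReal (u ^ (a - 1) * rearr f t ^ q) ≤
      ∫⁻ u in Set.Ioi (0:ℝ), ENNReal.ofReal (u ^ (a - 1) * rearr f u ^ q) := by
    refine le_trans (setLIntegral_mono' measurableSet_Ioc fun u hu => ?_)
      (lintegral_mono_set fun u hu => hu.1)
    exact ENNReal.ofReal_le_ofReal (mul_le_mul_of_nonneg_left
      (Real.rpow_le_rpow (rearr_nonneg f t) (rearr_anti (hne u hu.1) hu.2) hq.le)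
      (Real.rpow_nonneg hu.1.le _))
  have step2 : ∫⁻ u in Set.Ioc (0:ℝ) t, ENNReal.ofReal (u ^ (a - 1) * rearr f t ^ q)
      = ENNReal.ofReal (rearr f t ^ q) * ∫⁻ u in Set.Ioc (0:ℝ) t, ENNReal.ofReal (u ^ (a - 1)) := by
    rw [← lintegral_const_mul' _ _ ENNReal.ofReal_ne_top]
    apply setLIntegral_congr_fun measurableSet_Ioc (fun u hu => ?_)
    rw [← ENNReal.ofReal_mul (Real.rpow_nonneg (rearr_nonneg f t) q), mul_comm]
  have step3 : ∫⁻ u in Set.Ioc (0:ℝ) t, ENNReal.ofReal (u ^ (a - 1))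
      = ENNReal.ofReal (t ^ a / a) := by
    have hint : IntegrableOn (fun u : ℝ => u ^ (a - 1)) (Set.Ioc 0 t) volume :=
      (intervalIntegral.intervalIntegrable_rpow' (by linarith)).1
    rw [← ofReal_integral_eq_lintegral_ofReal hint
      (((ae_restrict_mem measurableSet_Ioc).mono fun u hu => Real.rpow_nonneg hu.1.le _))]
    congr 1
    rw [← intervalIntegral.integral_of_le ht.le,
      integral_rpow (Or.inl (by linarith)), sub_add_cancel,
      Real.zero_rpow ha0.ne', sub_zero]
  calc ENNReal.ofReal (t ^ a * rearr f t ^ q)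
      = ENNReal.ofReal a * (ENNReal.ofReal (rearr f t ^ q) * ENNReal.ofReal (t ^ a / a)) := by
        rw [← ENNReal.ofReal_mul (Real.rpow_nonneg (rearr_nonneg f t) q),
          ← ENNReal.ofReal_mul ha0.le]
        congr 1
        field_simp
    _ ≤ ENNReal.ofReal a *
        ∫⁻ u in Set.Ioi (0:ℝ), ENNReal.ofReal (u ^ (a - 1) * rearr f u ^ q) := by
        apply mul_le_mul_right
        rw [← step3, ← step2]
        exact step1

lemma lorentz_interp {p q r : ℝ} (hp : 0 < p) (hq : 0 < q) (hqr : q < r) {f : ℝ → ℂ}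
    (hf : AEMeasurable f mIoi) :
    lorentzNormE p r f ≤ ENNReal.ofReal ((r / q) ^ (1 / r)) * lorentzNormE p q f := by
  have hr : 0 < r := hq.trans hqr
  by_cases hbad : ∀ s : ℝ, mIoi {x | s < ‖f x‖} = ⊤
  · rw [lorentzNormE_zero p r hr (fun t _ => rearr_eq_zero_of_bad hbad t)]
    exact zero_le
  push_neg at hbad
  by_cases htop : lorentzNormE p q f = ⊤
  · rw [htop, ENNReal.mul_top (ENNReal.ofReal_pos.mpr (by positivity)).ne']
    exact le_top
  set M := lorentzNormE p q f with hM
  have hne := fun u hu => rearrSet_nonempty hf hbad (t := u) hu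
  have hwb : ∀ t : ℝ, 0 < t → ENNReal.ofReal (t ^ (q / p) * rearr f t ^ q) ≤ M ^ q :=
    fun t ht => weak_bound hp hq ht hne
  by_cases hM0 : M = 0
  · have hz : ∀ t : ℝ, 0 < t → rearr f t = 0 := by
      intro t ht
      have h1 := hwb t ht
      rw [hM0, ENNReal.zero_rpow_of_pos hq, le_zero_iff, ENNReal.ofReal_eq_zero] at h1
      have htq : 0 < t ^ (q / p) := Real.rpow_pos_of_pos ht _
      have h2 : rearr f t ^ q ≤ 0 := by nlinarith [Real.rpow_nonneg (rearr_nonneg f t) q]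
      by_contra hc
      have : 0 < rearr f t := lt_of_le_of_ne (rearr_nonneg f t) (Ne.symm hc)
      exact absurd h2 (not_le.mpr (Real.rpow_pos_of_pos this q))
    rw [lorentzNormE_zero p r hr hz]
    exact zero_le
  have hp' : p ≠ 0 := hp.ne'
  have hq' : q ≠ 0 := hq.ne'
  have hr' : r ≠ 0 := hr.ne'
  set e := (r - q) / q with he
  have he0 : 0 < e := by rw [he]; exact div_pos (by linarith) hq
  have hMq_ne_top : M ^ q ≠ ⊤ := ENNReal.rpow_ne_top_of_nonneg hq.le htop
  have hpt : ∀ t ∈ Set.Ioi (0:ℝ),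
      ENNReal.ofReal (t ^ (r / p - 1) * rearr f t ^ r) ≤
        (M ^ q) ^ e * ENNReal.ofReal (t ^ (q / p - 1) * rearr f t ^ q) := by
    intro t ht
    have ht0 : (0:ℝ) < t := ht
    have hμ := rearr_nonneg f t
    have hid : t ^ (r / p - 1) * rearr f t ^ r
        = (t ^ (q / p) * rearr f t ^ q) ^ e * (t ^ (q / p - 1) * rearr f t ^ q) := by
      rw [Real.mul_rpow (Real.rpow_nonneg ht0.le _) (Real.rpow_nonneg hμ _),
        ← Real.rpow_mul ht0.le, ← Real.rpow_mul hμ]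
      have h1 : q / p * e = (r - q) / p := by rw [he]; field_simp
      have h2 : q * e = r - q := by rw [he]; field_simp
      rw [h1, h2, show t ^ ((r - q) / p) * rearr f t ^ (r - q) * (t ^ (q / p - 1) * rearr f t ^ q)
          = t ^ ((r - q) / p) * t ^ (q / p - 1) * (rearr f t ^ (r - q) * rearr f t ^ q) from by
          ring,
        ← Real.rpow_add ht0, ← Real.rpow_add_of_nonneg hμ (by linarith) hq.le]
      congr 2 <;> ring
    have hX0 : 0 ≤ t ^ (q / p) * rearr f t ^ q :=
      mul_nonneg (Real.rpow_nonneg ht0.le _) (Real.rpow_nonneg hμ _)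
    rw [hid, ENNReal.ofReal_mul (Real.rpow_nonneg hX0 e),
      ← ENNReal.ofReal_rpow_of_nonneg hX0 he0.le]
    exact mul_le_mul_left (ENNReal.rpow_le_rpow (hwb t ht0) he0.le) _
  have hIr : ∫⁻ t in Set.Ioi (0:ℝ), ENNReal.ofReal (t ^ (r / p - 1) * rearr f t ^ r) ≤
      (M ^ q) ^ e * ∫⁻ t in Set.Ioi (0:ℝ), ENNReal.ofReal (t ^ (q / p - 1) * rearr f t ^ q) := by
    rw [← lintegral_const_mul' _ _ (ENNReal.rpow_ne_top_of_nonneg he0.le hMq_ne_top)]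
    exact setLIntegral_mono' measurableSet_Ioi hpt
  have hsplit : ENNReal.ofReal (r / p) = ENNReal.ofReal (r / q) * ENNReal.ofReal (q / p) := by
    rw [← ENNReal.ofReal_mul (div_nonneg hr.le hq.le)]
    congr 1
    field_simp
  have hpow : (M ^ q) ^ e * M ^ q = M ^ r := by
    rw [← ENNReal.rpow_mul, ← ENNReal.rpow_add _ _ hM0 htop]
    congr 1
    rw [he]
    field_simp
    ring
  calc lorentzNormE p r f
      = (ENNReal.ofReal (r / p) *
          ∫⁻ t in Set.Ioi (0:ℝ), ENNReal.ofReal (t ^ (r / p - 1) * rearr f t ^ r)) ^ (1 / r) :=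
        rfl
    _ ≤ (ENNReal.ofReal (r / p) * ((M ^ q) ^ e *
          ∫⁻ t in Set.Ioi (0:ℝ), ENNReal.ofReal (t ^ (q / p - 1) * rearr f t ^ q))) ^ (1 / r) :=
        ENNReal.rpow_le_rpow (mul_le_mul_right hIr _) (by positivity)
    _ = (ENNReal.ofReal (r / q) * ((M ^ q) ^ e * (ENNReal.ofReal (q / p) *
          ∫⁻ t in Set.Ioi (0:ℝ), ENNReal.ofReal (t ^ (q / p - 1) * rearr f t ^ q)))) ^ (1 / r) :=
        by rw [hsplit]; congr 1; ring
    _ = (ENNReal.ofReal (r / q) * M ^ r) ^ (1 / r) := by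
        rw [← lorentzNormE_rpow hq f, ← hM, hpow]
    _ = ENNReal.ofReal ((r / q) ^ (1 / r)) * M := by
        rw [ENNReal.mul_rpow_of_nonneg _ _ (by positivity),
          ENNReal.ofReal_rpow_of_nonneg (by positivity) (by positivity),
          ← ENNReal.rpow_mul, mul_one_div_cancel hr.ne', ENNReal.rpow_one]

open scoped Pointwise in
lemma rearr_smul (c : ℂ) (f : ℝ → ℂ) (t : ℝ) :
    rearr (c • f) t = ‖c‖ * rearr f t := by
  rcases eq_or_ne c 0 with rfl | hc
  · have h0 : (0:ℂ) • f = fun _ => (0:ℂ) := by ext x; simp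
    rw [h0, norm_zero, zero_mul, rearr]
    have hset : {s : ℝ | 0 ≤ s ∧ mIoi {x | s < ‖(0:ℂ)‖} ≤ ENNReal.ofReal t}
        = {s : ℝ | 0 ≤ s} := by
      ext s
      simp only [Set.mem_setOf_eq, norm_zero, and_iff_left_iff_imp]
      intro hs
      have : {x : ℝ | s < 0} = ∅ := by
        apply Set.eq_empty_iff_forall_notMem.mpr
        intro x hx
        exact absurd (lt_of_le_of_lt hs hx) (lt_irrefl 0)
      rw [this, measure_empty]
      exact zero_le
    rw [hset]
    exact csInf_Ici
  · have hc' : 0 < ‖c‖ := norm_pos_iff.mpr hc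
    have hset : {s : ℝ | 0 ≤ s ∧ mIoi {x | s < ‖(c • f) x‖} ≤ ENNReal.ofReal t}
        = ‖c‖ • {s : ℝ | 0 ≤ s ∧ mIoi {x | s < ‖f x‖} ≤ ENNReal.ofReal t} := by
      ext s
      simp only [Set.mem_smul_set, Pi.smul_apply, norm_smul, norm_mul, Set.mem_setOf_eq, smul_eq_mul]
      constructor
      · rintro ⟨hs0, hsd⟩
        refine ⟨s / ‖c‖, ⟨div_nonneg hs0 hc'.le, ?_⟩, by rw [mul_comm]; exact div_mul_cancel₀ s hc'.ne'⟩
        have : {x : ℝ | s / ‖c‖ < ‖f x‖} = {x : ℝ | s < ‖c‖ * ‖f x‖} := by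
          ext x
          rw [Set.mem_setOf_eq, Set.mem_setOf_eq, div_lt_iff₀ hc', mul_comm]
        rw [this]
        exact hsd
      · rintro ⟨u, ⟨hu0, hud⟩, rfl⟩
        refine ⟨mul_nonneg hc'.le hu0, ?_⟩
        have : {x : ℝ | ‖c‖ * u < ‖c‖ * ‖f x‖} = {x : ℝ | u < ‖f x‖} := by
          ext x
          rw [Set.mem_setOf_eq, Set.mem_setOf_eq, mul_lt_mul_iff_right₀ hc']
        rw [this]
        exact hud
    rw [rearr, hset, Real.sInf_smul_of_nonneg hc'.le, smul_eq_mul, rearr]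

lemma lorentzNormE_smul (p : ℝ) {q : ℝ} (hq : 0 < q) (c : ℂ) (f : ℝ → ℂ) :
    lorentzNormE p q (c • f) = ENNReal.ofReal ‖c‖ * lorentzNormE p q f := by
  have h1 : ∀ t ∈ Set.Ioi (0:ℝ), ENNReal.ofReal (t ^ (q / p - 1) * rearr (c • f) t ^ q)
      = ENNReal.ofReal (‖c‖ ^ q) * ENNReal.ofReal (t ^ (q / p - 1) * rearr f t ^ q) := by
    intro t ht
    rw [rearr_smul, Real.mul_rpow (norm_nonneg c) (rearr_nonneg f t),
      ← ENNReal.ofReal_mul (Real.rpow_nonneg (norm_nonneg c) q)]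
    congr 1
    ring
  rw [lorentzNormE, setLIntegral_congr_fun measurableSet_Ioi h1,
    lintegral_const_mul' _ _ ENNReal.ofReal_ne_top, show ENNReal.ofReal (q / p) *
      (ENNReal.ofReal (‖c‖ ^ q) * ∫⁻ t in Set.Ioi (0:ℝ),
        ENNReal.ofReal (t ^ (q / p - 1) * rearr f t ^ q))
      = ENNReal.ofReal (‖c‖ ^ q) * (ENNReal.ofReal (q / p) * ∫⁻ t in Set.Ioi (0:ℝ),
        ENNReal.ofReal (t ^ (q / p - 1) * rearr f t ^ q)) from by ring,
    ENNReal.mul_rpow_of_nonneg _ _ (by positivity),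
    ENNReal.ofReal_rpow_of_nonneg (Real.rpow_nonneg (norm_nonneg c) q) (by positivity),
    ← Real.rpow_mul (norm_nonneg c), mul_one_div_cancel hq.ne', Real.rpow_one, lorentzNormE]

lemma lorNorm_smul (p : ℝ) {q : ℝ} (hq : 0 < q) (c : ℂ) (f : ℝ → ℂ) :
    lorNorm p q (c • f) = ‖c‖ * lorNorm p q f := by
  rw [lorNorm, lorNorm, lorentzNormE_smul p hq, ENNReal.toReal_mul,
    ENNReal.toReal_ofReal (norm_nonneg c)]

lemma lorNorm_nonneg (p q : ℝ) (f : ℝ → ℂ) : 0 ≤ lorNorm p q f := ENNReal.toReal_nonneg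

/-- Let `0 < p < ∞` and `0 < q < r < ∞`, and let `X` be a closed linear
subspace of `L_{p,q}(0,∞)` which is strongly embedded. Then the `L_{p,r}` quasi-norm dominates
a positive multiple of the `L_{p,q}` quasi-norm on `X`; since moreover
`‖·‖_{p,r} ≤ C(p,q,r) ‖·‖_{p,q}` holds for all measurable functions, `X` embeds isomorphically
into `L_{p,r}(0,∞)` via the inclusion map. -/
theorem strongly_embedded_into_Lpr (p q r : ℝ) (hp : 0 < p) (hq : 0 < q) (hqr : q < r)
    (X : Submodule ℂ (ℝ → ℂ)) (hXmem : ∀ f ∈ X, MemLorentz p q f)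
    (hXclosed : ∀ g : ℝ → ℂ, MemLorentz p q g →
      (∀ ε : ℝ, 0 < ε → ∃ f ∈ X, lorNorm p q (g - f) < ε) → g ∈ X)
    (hse : StronglyEmbedded p q X) :
    (∃ c : ℝ, 0 < c ∧ ∀ f ∈ X, c * lorNorm p q f ≤ lorNorm p r f) ∧
    (∃ C : ℝ, 0 < C ∧ ∀ f : ℝ → ℂ, AEMeasurable f mIoi →
      lorentzNormE p r f ≤ ENNReal.ofReal C * lorentzNormE p q f) := by
  have hr : 0 < r := hq.trans hqr
  have hCpos : (0:ℝ) < (r / q) ^ (1 / r) := Real.rpow_pos_of_pos (div_pos hr hq) _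
  refine ⟨?_, ⟨(r / q) ^ (1 / r), hCpos, fun f hf => lorentz_interp hp hq hqr hf⟩⟩
  by_contra hcon
  push_neg at hcon
  have hsel : ∀ n : ℕ, ∃ f, f ∈ X ∧ lorNorm p r f < (1 / (n + 1)) * lorNorm p q f := by
    intro n
    obtain ⟨f, hfX, hf⟩ := hcon (1 / (n + 1)) (by positivity)
    exact ⟨f, hfX, hf⟩
  choose f hfX hflt using hsel
  have hfq_pos : ∀ n, 0 < lorNorm p q (f n) := by
    intro n
    rcases lt_or_eq_of_le (lorNorm_nonneg p q (f n)) with h | h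
    · exact h
    · exfalso
      have h2 := hflt n
      rw [← h, mul_zero] at h2
      exact absurd h2 (not_lt.mpr (lorNorm_nonneg p r (f n)))
  set x : ℕ → ℝ → ℂ := fun n => (((lorNorm p q (f n) : ℝ) : ℂ))⁻¹ • f n with hx
  have hxX : ∀ n, x n ∈ X := fun n => X.smul_mem _ (hfX n)
  have hninv : ∀ n, ‖(((lorNorm p q (f n) : ℝ) : ℂ))⁻¹‖ = (lorNorm p q (f n))⁻¹ := by
    intro n
    rw [norm_inv, Complex.norm_real, Real.norm_of_nonneg (lorNorm_nonneg p q (f n))]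
  have hxq : ∀ n, lorNorm p q (x n) = 1 := by
    intro n
    simp only [hx]
    rw [lorNorm_smul p hq, hninv n, inv_mul_cancel₀ (hfq_pos n).ne']
  have hxr : ∀ n, lorNorm p r (x n) < 1 / (n + 1) := by
    intro n
    simp only [hx]
    rw [lorNorm_smul p hr, hninv n]
    calc (lorNorm p q (f n))⁻¹ * lorNorm p r (f n)
        < (lorNorm p q (f n))⁻¹ * ((1 / (n + 1)) * lorNorm p q (f n)) :=
          mul_lt_mul_of_pos_left (hflt n) (inv_pos.mpr (hfq_pos n))
      _ = 1 / (n + 1) := by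
          rw [mul_comm (1 / ((n:ℝ) + 1)), ← mul_assoc, inv_mul_cancel₀ (hfq_pos n).ne', one_mul]
  have hxmeas : ∀ n, AEMeasurable (x n) mIoi := fun n => (hXmem _ (hxX n)).1
  have hgood : ∀ n, ∃ s : ℝ, mIoi {y | s < ‖x n y‖} ≠ ⊤ := by
    intro n
    by_contra hb
    push_neg at hb
    have h0 : lorentzNormE p q (x n) = 0 :=
      lorentzNormE_zero p q hq (fun t _ => rearr_eq_zero_of_bad hb t)
    have h1 := hxq n
    rw [lorNorm, h0, ENNReal.toReal_zero] at h1
    exact zero_ne_one h1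
  have hrtop : ∀ n, lorentzNormE p r (x n) ≠ ⊤ := by
    intro n
    have h1 := lorentz_interp hp hq hqr (hxmeas n)
    exact (lt_of_le_of_lt h1 (ENNReal.mul_lt_top ENNReal.ofReal_lt_top
      (hXmem _ (hxX n)).2)).ne
  have htim : TendstoInMeasure mIoi x atTop (0 : ℝ → ℂ) := by
    rw [tendstoInMeasure_iff_dist]
    intro ε hε
    rw [ENNReal.tendsto_nhds_zero]
    intro δ hδ
    set δ₀ : ℝ := if δ = ⊤ then 1 else δ.toReal with hδ₀def
    have hδ₀ : 0 < δ₀ := by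
      rw [hδ₀def]
      split_ifs with h
      · exact one_pos
      · exact ENNReal.toReal_pos hδ.ne' h
    have hδ₀le : ENNReal.ofReal δ₀ ≤ δ := by
      rw [hδ₀def]
      split_ifs with h
      · rw [h]; exact le_top
      · rw [ENNReal.ofReal_toReal h]
    obtain ⟨N, hN⟩ := exists_nat_one_div_lt (mul_pos hε (Real.rpow_pos_of_pos hδ₀ (1/p)))
    filter_upwards [Filter.eventually_ge_atTop N] with n hn
    have hLlt : lorNorm p r (x n) < ε * δ₀ ^ (1/p) := by
      calc lorNorm p r (x n) < 1 / (n + 1) := hxr n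
        _ ≤ 1 / (N + 1) := by
            apply one_div_le_one_div_of_le (by positivity)
            have hNn : (N:ℝ) ≤ n := by exact_mod_cast hn
            linarith
        _ < ε * δ₀ ^ (1/p) := hN
    have hkey : rearr (x n) δ₀ < ε := by
      by_contra hcon2
      push_neg at hcon2
      have hwb := weak_bound hp hr hδ₀ (fun u hu => rearrSet_nonempty (hxmeas n) (hgood n) hu)
      have hMr : lorentzNormE p r (x n) ^ r = ENNReal.ofReal (lorNorm p r (x n) ^ r) := by
        rw [← ENNReal.ofReal_rpow_of_nonneg (lorNorm_nonneg p r (x n)) hr.le, lorNorm,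
          ENNReal.ofReal_toReal (hrtop n)]
      rw [hMr] at hwb
      have hreal : δ₀ ^ (r/p) * rearr (x n) δ₀ ^ r ≤ lorNorm p r (x n) ^ r :=
        (ENNReal.ofReal_le_ofReal_iff (Real.rpow_nonneg (lorNorm_nonneg p r (x n)) r)).mp hwb
      have hlow : δ₀ ^ (r/p) * ε ^ r ≤ δ₀ ^ (r/p) * rearr (x n) δ₀ ^ r :=
        mul_le_mul_of_nonneg_left (Real.rpow_le_rpow hε.le hcon2 hr.le)
          (Real.rpow_nonneg hδ₀.le _)
      have hup : lorNorm p r (x n) ^ r < (ε * δ₀ ^ (1/p)) ^ r :=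
        Real.rpow_lt_rpow (lorNorm_nonneg p r (x n)) hLlt hr
      have hexp : (ε * δ₀ ^ (1/p)) ^ r = δ₀ ^ (r/p) * ε ^ r := by
        rw [Real.mul_rpow hε.le (Real.rpow_nonneg hδ₀.le _), ← Real.rpow_mul hδ₀.le,
          show 1/p * r = r/p from by ring]
        ring
      rw [hexp] at hup
      linarith
    have hmeas := meas_le_of_rearr_lt
      (rearrSet_nonempty (hxmeas n) (hgood n) hδ₀) hkey
    have hseteq : {y | ε ≤ dist (x n y) ((0 : ℝ → ℂ) y)} = {y | ε ≤ ‖x n y‖} := by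
      ext y
      simp [dist_zero_right]
    calc mIoi {y | ε ≤ dist (x n y) ((0 : ℝ → ℂ) y)}
        = mIoi {y | ε ≤ ‖x n y‖} := by rw [hseteq]
      _ ≤ ENNReal.ofReal δ₀ := hmeas
      _ ≤ δ := hδ₀le
  have hlim := hse x hxX htim
  have h1 : Tendsto (fun _ : ℕ => (1:ℝ)) atTop (nhds 0) := by
    simpa [hxq] using hlim
  exact one_ne_zero (tendsto_nhds_unique tendsto_const_nhds h1)


end
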